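/- Suppose orthonormal vectors u_1,...,u_D minimize Σ_i u_i^T L u_i over all orthonormal D-tuples, where L is symmetric with diagonal entries L_{aa}. Define f_a = Σ_i u_{ia}^2 for each coordinate a. If the minimum value can be written as Σ_a L_{aa} f_a + C where C is invariant under swapping coordinates x and y of all the u_i, and L_{xx} < L_{yy}, then f_y ≤ f_x. -/
import Mathlib


theorem stmt_7 (N D : ℕ) (L : Matrix (Fin N) (Fin N) ℝ) (hL : L.IsSymm)
    (x y : Fin N) (hxy : x ≠ y)
    (u : Fin D → Fin N → ℝ)
    (hortho : ∀ i j, (∑ a, u i a * u j a) = if i = j then (1:ℝ) else 0)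
    (hmin : ∀ v : Fin D → Fin N → ℝ,
      (∀ i j, (∑ a, v i a * v j a) = if i = j then (1:ℝ) else 0) →
      (∑ i, ∑ a, ∑ b, u i a * L a b * u i b) ≤
        ∑ i, ∑ a, ∑ b, v i a * L a b * v i b)
    (C : (Fin D → Fin N → ℝ) → ℝ)
    (hdecomp : ∀ v : Fin D → Fin N → ℝ,
      (∑ i, ∑ a, ∑ b, v i a * L a b * v i b) =
        (∑ a, L a a * ∑ i, (v i a) ^ 2) + C v)
    (hCswap : C (fun i a => u i (Equiv.swap x y a)) = C u)
    (hLdiag : L x x < L y y) :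
    (∑ i, (u i y) ^ 2) ≤ ∑ i, (u i x) ^ 2 := by
  set v : Fin D → Fin N → ℝ := fun i a => u i (Equiv.swap x y a) with hv
  have hvortho : ∀ i j, (∑ a, v i a * v j a) = if i = j then (1:ℝ) else 0 := by
    intro i j
    rw [← hortho i j]
    exact Equiv.sum_comp (Equiv.swap x y) (fun a => u i a * u j a)
  have hle := hmin v hvortho
  rw [hdecomp u, hdecomp v, hCswap] at hle
  have hle2 : (∑ a, L a a * ∑ i, (u i a) ^ 2) ≤
      ∑ a, L a a * ∑ i, (u i (Equiv.swap x y a)) ^ 2 := by linarith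
  have hre : (∑ a, L a a * ∑ i, (u i (Equiv.swap x y a)) ^ 2) =
      ∑ a, L (Equiv.swap x y a) (Equiv.swap x y a) * ∑ i, (u i a) ^ 2 := by
    rw [← Equiv.sum_comp (Equiv.swap x y)
      (fun a => L (Equiv.swap x y a) (Equiv.swap x y a) * ∑ i, (u i a) ^ 2)]
    simp
  rw [hre] at hle2
  have key : (0:ℝ) ≤ ∑ a, (L (Equiv.swap x y a) (Equiv.swap x y a) - L a a) *
      ∑ i, (u i a) ^ 2 := by
    have := sub_nonneg.mpr hle2
    rw [← Finset.sum_sub_distrib] at this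
    calc (0:ℝ) ≤ _ := this
      _ = _ := by apply Finset.sum_congr rfl; intro a _; ring
  have hsplit : (∑ a, (L (Equiv.swap x y a) (Equiv.swap x y a) - L a a) *
      ∑ i, (u i a) ^ 2) =
      (L y y - L x x) * (∑ i, (u i x) ^ 2) + (L x x - L y y) * (∑ i, (u i y) ^ 2) := by
    rw [← Finset.sum_subset (Finset.subset_univ ({x, y} : Finset (Fin N)))]
    · rw [Finset.sum_pair hxy, Equiv.swap_apply_left, Equiv.swap_apply_right]
    · intro a _ ha
      simp only [Finset.mem_insert, Finset.mem_singleton, not_or] at ha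
      rw [Equiv.swap_apply_of_ne_of_ne ha.1 ha.2, sub_self, zero_mul]
  rw [hsplit] at key
  nlinarith [key]
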